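/- arXiv:1806.04804 — 7 statements merged into one kernel-verified Lean document; each statement's English description precedes it below -/
import Mathlib

section
/- For any coalgebra modality (!, δ, ε, Δ, e) on a symmetric monoidal category, the comonad comultiplication preserves the counit of the comonoid structure: for every object A, δ ; e = e as maps !A → K (where the first e is e at !A and the second is e at A). Consequently each δ : !A → !!A is a comonoid morphism from (!A, Δ, e) to (!!A, Δ, e). -/
open CategoryTheory MonoidalCategory

universe v u

/-- Commutative-monoid enrichment: every hom-set carries a commutative monoid
structure (addition `+` and zero `0`), with no negatives assumed. -/
class HomAddCommMonoid (C : Type u) [Category.{v} C] where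
  homAddCommMonoid : ∀ X Y : C, AddCommMonoid (X ⟶ Y)

attribute [instance] HomAddCommMonoid.homAddCommMonoid

/-- An additive symmetric monoidal category: a symmetric monoidal category whose
hom-sets are commutative monoids, such that composition and the tensor product of
morphisms preserve the addition and the zero in each argument. -/
class AdditiveSymmetricMonoidal (C : Type u) [Category.{v} C] [MonoidalCategory C]
    [SymmetricCategory C] [HomAddCommMonoid C] : Prop where
  add_comp : ∀ {X Y Z : C} (f g : X ⟶ Y) (h : Y ⟶ Z), (f + g) ≫ h = f ≫ h + g ≫ h
  comp_add : ∀ {X Y Z : C} (f : X ⟶ Y) (g h : Y ⟶ Z), f ≫ (g + h) = f ≫ g + f ≫ h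
  zero_comp : ∀ {X Y Z : C} (g : Y ⟶ Z), (0 : X ⟶ Y) ≫ g = 0
  comp_zero : ∀ {X Y Z : C} (f : X ⟶ Y), f ≫ (0 : Y ⟶ Z) = 0
  whiskerLeft_add : ∀ (X : C) {Y Z : C} (f g : Y ⟶ Z), X ◁ (f + g) = X ◁ f + X ◁ g
  add_whiskerRight : ∀ {Y Z : C} (f g : Y ⟶ Z) (X : C), (f + g) ▷ X = f ▷ X + g ▷ X
  whiskerLeft_zero : ∀ (X Y Z : C), X ◁ (0 : Y ⟶ Z) = 0
  zero_whiskerRight : ∀ (Y Z X : C), (0 : Y ⟶ Z) ▷ X = 0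

/-- A coalgebra modality `(!, δ, ε, Δ, e)` on a symmetric monoidal category:
a comonad `(!, δ, ε)` together with natural transformations `Δ : !A ⟶ !A ⊗ !A` and
`e : !A ⟶ 𝟙_ C` making each `(!A, Δ, e)` a cocommutative comonoid, and such that
`δ` preserves the comultiplication. -/
structure CoalgebraModality (C : Type u) [Category.{v} C] [MonoidalCategory C]
    [SymmetricCategory C] where
  obj : C → C
  map : ∀ {A B : C}, (A ⟶ B) → (obj A ⟶ obj B)
  map_id : ∀ A : C, map (𝟙 A) = 𝟙 (obj A)
  map_comp : ∀ {A B D : C} (f : A ⟶ B) (g : B ⟶ D), map (f ≫ g) = map f ≫ map g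
  δ : ∀ A : C, obj A ⟶ obj (obj A)
  ε : ∀ A : C, obj A ⟶ A
  Δ : ∀ A : C, obj A ⟶ obj A ⊗ obj A
  e : ∀ A : C, obj A ⟶ 𝟙_ C
  δ_natural : ∀ {A B : C} (f : A ⟶ B), map f ≫ δ B = δ A ≫ map (map f)
  ε_natural : ∀ {A B : C} (f : A ⟶ B), map f ≫ ε B = ε A ≫ f
  Δ_natural : ∀ {A B : C} (f : A ⟶ B), map f ≫ Δ B = Δ A ≫ (map f ⊗ₘ map f)
  e_natural : ∀ {A B : C} (f : A ⟶ B), map f ≫ e B = e A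
  δ_assoc : ∀ A : C, δ A ≫ δ (obj A) = δ A ≫ map (δ A)
  δ_counit : ∀ A : C, δ A ≫ ε (obj A) = 𝟙 (obj A)
  δ_map_counit : ∀ A : C, δ A ≫ map (ε A) = 𝟙 (obj A)
  comul_assoc : ∀ A : C,
    Δ A ≫ (Δ A ▷ obj A) ≫ (α_ (obj A) (obj A) (obj A)).hom = Δ A ≫ (obj A ◁ Δ A)
  comul_counit : ∀ A : C, Δ A ≫ (e A ▷ obj A) = (λ_ (obj A)).inv
  counit_comul : ∀ A : C, Δ A ≫ (obj A ◁ e A) = (ρ_ (obj A)).inv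
  comul_comm : ∀ A : C, Δ A ≫ (β_ (obj A) (obj A)).hom = Δ A
  δ_comul : ∀ A : C, δ A ≫ Δ (obj A) = Δ A ≫ (δ A ⊗ₘ δ A)

section NonAdditive

variable {C : Type u} [Category.{v} C] [MonoidalCategory C] [SymmetricCategory C]

/-- The middle-four interchange `(X ⊗ Y) ⊗ (Z ⊗ W) ⟶ (X ⊗ Z) ⊗ (Y ⊗ W)`,
that is `1 ⊗ σ ⊗ 1` up to associativity. -/
def mswap (X Y Z W : C) : (X ⊗ Y) ⊗ (Z ⊗ W) ⟶ (X ⊗ Z) ⊗ (Y ⊗ W) :=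
  (α_ X Y (Z ⊗ W)).hom ≫ (X ◁ (α_ Y Z W).inv) ≫ (X ◁ ((β_ Y Z).hom ▷ W)) ≫
    (X ◁ (α_ Z Y W).hom) ≫ (α_ X Z (Y ⊗ W)).inv

/-- The axioms making `(Q, mT, mK)` a monoidal coalgebra modality:
`(!, mT, mK)` is a symmetric monoidal functor, `(!, δ, ε, mT, mK)` is a symmetric
monoidal comonad (`δ` and `ε` are monoidal natural transformations), and `Δ` and `e`
are monoidal natural transformations as well as `!`-coalgebra morphisms. -/
structure IsMonoidalCoalgebraModality (Q : CoalgebraModality C)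
    (mT : ∀ A B : C, Q.obj A ⊗ Q.obj B ⟶ Q.obj (A ⊗ B))
    (mK : 𝟙_ C ⟶ Q.obj (𝟙_ C)) : Prop where
  mT_natural : ∀ {A A' B B' : C} (f : A ⟶ A') (g : B ⟶ B'),
    (Q.map f ⊗ₘ Q.map g) ≫ mT A' B' = mT A B ≫ Q.map (f ⊗ₘ g)
  mT_assoc : ∀ A B D : C,
    (mT A B ▷ Q.obj D) ≫ mT (A ⊗ B) D ≫ Q.map (α_ A B D).hom =
      (α_ (Q.obj A) (Q.obj B) (Q.obj D)).hom ≫ (Q.obj A ◁ mT B D) ≫ mT A (B ⊗ D)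
  mT_left_unit : ∀ A : C,
    (mK ▷ Q.obj A) ≫ mT (𝟙_ C) A ≫ Q.map (λ_ A).hom = (λ_ (Q.obj A)).hom
  mT_right_unit : ∀ A : C,
    (Q.obj A ◁ mK) ≫ mT A (𝟙_ C) ≫ Q.map (ρ_ A).hom = (ρ_ (Q.obj A)).hom
  mT_symm : ∀ A B : C,
    (β_ (Q.obj A) (Q.obj B)).hom ≫ mT B A = mT A B ≫ Q.map (β_ A B).hom
  δ_monoidal : ∀ A B : C, mT A B ≫ Q.δ (A ⊗ B) =
    (Q.δ A ⊗ₘ Q.δ B) ≫ mT (Q.obj A) (Q.obj B) ≫ Q.map (mT A B)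
  δ_monoidal_unit : mK ≫ Q.δ (𝟙_ C) = mK ≫ Q.map mK
  ε_monoidal : ∀ A B : C, mT A B ≫ Q.ε (A ⊗ B) = Q.ε A ⊗ₘ Q.ε B
  ε_monoidal_unit : mK ≫ Q.ε (𝟙_ C) = 𝟙 (𝟙_ C)
  Δ_monoidal : ∀ A B : C, mT A B ≫ Q.Δ (A ⊗ B) =
    (Q.Δ A ⊗ₘ Q.Δ B) ≫ mswap (Q.obj A) (Q.obj A) (Q.obj B) (Q.obj B) ≫ (mT A B ⊗ₘ mT A B)
  Δ_monoidal_unit : mK ≫ Q.Δ (𝟙_ C) = (λ_ (𝟙_ C)).inv ≫ (mK ⊗ₘ mK)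
  e_monoidal : ∀ A B : C, mT A B ≫ Q.e (A ⊗ B) = (Q.e A ⊗ₘ Q.e B) ≫ (λ_ (𝟙_ C)).hom
  e_monoidal_unit : mK ≫ Q.e (𝟙_ C) = 𝟙 (𝟙_ C)
  Δ_coalgebra_morphism : ∀ A : C,
    Q.Δ A ≫ (Q.δ A ⊗ₘ Q.δ A) ≫ mT (Q.obj A) (Q.obj A) = Q.δ A ≫ Q.map (Q.Δ A)
  e_coalgebra_morphism : ∀ A : C, Q.e A ≫ mK = Q.δ A ≫ Q.map (Q.e A)

end NonAdditive

section Additive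

variable {C : Type u} [Category.{v} C] [MonoidalCategory C] [SymmetricCategory C]
  [HomAddCommMonoid C]

/-- The map `ε ⊗ e + e ⊗ ε : !A ⊗ !A ⟶ A`. -/
def CoalgebraModality.phi (Q : CoalgebraModality C) (A : C) :
    Q.obj A ⊗ Q.obj A ⟶ A :=
  (Q.ε A ⊗ₘ Q.e A) ≫ (ρ_ A).hom + (Q.e A ⊗ₘ Q.ε A) ≫ (λ_ A).hom

/-- The axioms making `(Q, mul, unit)` a bialgebra modality: `mul = ∇` and
`unit = u` are natural, each `(!A, ∇, u)` is a commutative monoid, each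
`(!A, ∇, u, Δ, e)` is a bialgebra, and `∇ ; ε = ε ⊗ e + e ⊗ ε`. -/
structure IsBialgebraModality (Q : CoalgebraModality C)
    (mul : ∀ A : C, Q.obj A ⊗ Q.obj A ⟶ Q.obj A)
    (unit : ∀ A : C, 𝟙_ C ⟶ Q.obj A) : Prop where
  mul_natural : ∀ {A B : C} (f : A ⟶ B), (Q.map f ⊗ₘ Q.map f) ≫ mul B = mul A ≫ Q.map f
  unit_natural : ∀ {A B : C} (f : A ⟶ B), unit A ≫ Q.map f = unit B
  mul_assoc : ∀ A : C, (mul A ▷ Q.obj A) ≫ mul A =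
    (α_ (Q.obj A) (Q.obj A) (Q.obj A)).hom ≫ (Q.obj A ◁ mul A) ≫ mul A
  one_mul : ∀ A : C, (unit A ▷ Q.obj A) ≫ mul A = (λ_ (Q.obj A)).hom
  mul_one : ∀ A : C, (Q.obj A ◁ unit A) ≫ mul A = (ρ_ (Q.obj A)).hom
  mul_comm : ∀ A : C, (β_ (Q.obj A) (Q.obj A)).hom ≫ mul A = mul A
  mul_counit : ∀ A : C, mul A ≫ Q.e A = (Q.e A ⊗ₘ Q.e A) ≫ (λ_ (𝟙_ C)).hom
  unit_comul : ∀ A : C, unit A ≫ Q.Δ A = (λ_ (𝟙_ C)).inv ≫ (unit A ⊗ₘ unit A)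
  unit_counit : ∀ A : C, unit A ≫ Q.e A = 𝟙 (𝟙_ C)
  mul_comul : ∀ A : C, mul A ≫ Q.Δ A =
    (Q.Δ A ⊗ₘ Q.Δ A) ≫ mswap (Q.obj A) (Q.obj A) (Q.obj A) (Q.obj A) ≫ (mul A ⊗ₘ mul A)
  mul_counit_eps : ∀ A : C, mul A ≫ Q.ε A = Q.phi A

/-- An additive bialgebra modality: a bialgebra modality compatible with the
additive structure, i.e. `!(f + g) = Δ ; (!f ⊗ !g) ; ∇` and `!(0) = e ; u`. -/
def IsAdditiveBialgebraModality (Q : CoalgebraModality C)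
    (mul : ∀ A : C, Q.obj A ⊗ Q.obj A ⟶ Q.obj A)
    (unit : ∀ A : C, 𝟙_ C ⟶ Q.obj A) : Prop :=
  IsBialgebraModality Q mul unit ∧
    (∀ {A B : C} (f g : A ⟶ B),
      Q.map (f + g) = Q.Δ A ≫ (Q.map f ⊗ₘ Q.map g) ≫ mul B) ∧
    (∀ A B : C, Q.map (0 : A ⟶ B) = Q.e A ≫ unit B)

/-- The multiplication `∇ := (δ ⊗ δ) ; m⊗ ; !(ε ⊗ e + e ⊗ ε)` induced by a
monoidal coalgebra modality. -/
def inducedMul (Q : CoalgebraModality C)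
    (mT : ∀ A B : C, Q.obj A ⊗ Q.obj B ⟶ Q.obj (A ⊗ B)) (A : C) :
    Q.obj A ⊗ Q.obj A ⟶ Q.obj A :=
  (Q.δ A ⊗ₘ Q.δ A) ≫ mT (Q.obj A) (Q.obj A) ≫ Q.map (Q.phi A)

/-- The unit `u := m_K ; !(0)` induced by a monoidal coalgebra modality. -/
def inducedUnit (Q : CoalgebraModality C) (mK : 𝟙_ C ⟶ Q.obj (𝟙_ C)) (A : C) :
    𝟙_ C ⟶ Q.obj A :=
  mK ≫ Q.map (0 : 𝟙_ C ⟶ A)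

/-- The monoidal structure
`m⊗ := (δ ⊗ δ) ; (!(1 ⊗ u) ⊗ !(u ⊗ 1)) ; ∇ ; δ ; !(Δ) ; !(!(ε ⊗ e) ⊗ !(e ⊗ ε)) ; !(ε ⊗ ε)`
induced by an (additive) bialgebra modality. -/
def inducedMT (Q : CoalgebraModality C)
    (mul : ∀ A : C, Q.obj A ⊗ Q.obj A ⟶ Q.obj A)
    (unit : ∀ A : C, 𝟙_ C ⟶ Q.obj A) (A B : C) :
    Q.obj A ⊗ Q.obj B ⟶ Q.obj (A ⊗ B) :=
  (Q.δ A ⊗ₘ Q.δ B) ≫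
    (Q.map ((ρ_ (Q.obj A)).inv ≫ (Q.obj A ◁ unit B)) ⊗ₘ
      Q.map ((λ_ (Q.obj B)).inv ≫ (unit A ▷ Q.obj B))) ≫
    mul (Q.obj A ⊗ Q.obj B) ≫ Q.δ (Q.obj A ⊗ Q.obj B) ≫
    Q.map (Q.Δ (Q.obj A ⊗ Q.obj B)) ≫
    Q.map (Q.map ((Q.ε A ⊗ₘ Q.e B) ≫ (ρ_ A).hom) ⊗ₘ
      Q.map ((Q.e A ⊗ₘ Q.ε B) ≫ (λ_ B).hom)) ≫
    Q.map (Q.ε A ⊗ₘ Q.ε B)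

/-- The unit `m_K := u ; δ ; !(e)` induced by an (additive) bialgebra modality. -/
def inducedMK (Q : CoalgebraModality C) (unit : ∀ A : C, 𝟙_ C ⟶ Q.obj A) :
    𝟙_ C ⟶ Q.obj (𝟙_ C) :=
  unit (𝟙_ C) ≫ Q.δ (𝟙_ C) ≫ Q.map (Q.e (𝟙_ C))

section Rules

variable (Q : CoalgebraModality C)

/-- `d : !A ⊗ A ⟶ !A` is a natural transformation. -/
def DerivNatural (d : ∀ A : C, Q.obj A ⊗ A ⟶ Q.obj A) : Prop :=
  ∀ {A B : C} (f : A ⟶ B), (Q.map f ⊗ₘ f) ≫ d B = d A ≫ Q.map f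

/-- The constant rule [d.1] : `d ; e = 0`. -/
def ConstantRule (d : ∀ A : C, Q.obj A ⊗ A ⟶ Q.obj A) : Prop :=
  ∀ A : C, d A ≫ Q.e A = 0

/-- The Leibniz (product) rule [d.2] :
`d ; Δ = (Δ ⊗ 1) ; ((1 ⊗ d) + (1 ⊗ σ) ; (d ⊗ 1))`. -/
def LeibnizRule (d : ∀ A : C, Q.obj A ⊗ A ⟶ Q.obj A) : Prop :=
  ∀ A : C, d A ≫ Q.Δ A =
    (Q.Δ A ▷ A) ≫
      ((α_ (Q.obj A) (Q.obj A) A).hom ≫ (Q.obj A ◁ d A) +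
        (α_ (Q.obj A) (Q.obj A) A).hom ≫ (Q.obj A ◁ (β_ (Q.obj A) A).hom) ≫
          (α_ (Q.obj A) A (Q.obj A)).inv ≫ (d A ▷ Q.obj A))

/-- The linear rule [d.3] : `d ; ε = e ⊗ 1`. -/
def LinearRule (d : ∀ A : C, Q.obj A ⊗ A ⟶ Q.obj A) : Prop :=
  ∀ A : C, d A ≫ Q.ε A = (Q.e A ▷ A) ≫ (λ_ A).hom

/-- The chain rule [d.4] : `d ; δ = (Δ ⊗ 1) ; (δ ⊗ d) ; d`. -/
def ChainRule (d : ∀ A : C, Q.obj A ⊗ A ⟶ Q.obj A) : Prop :=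
  ∀ A : C, d A ≫ Q.δ A =
    (Q.Δ A ▷ A) ≫ (α_ (Q.obj A) (Q.obj A) A).hom ≫ (Q.δ A ⊗ₘ d A) ≫ d (Q.obj A)

/-- The interchange rule [d.5] : `(1 ⊗ σ) ; (d ⊗ 1) ; d = (d ⊗ 1) ; d`. -/
def InterchangeRule (d : ∀ A : C, Q.obj A ⊗ A ⟶ Q.obj A) : Prop :=
  ∀ A : C,
    (α_ (Q.obj A) A A).hom ≫ (Q.obj A ◁ (β_ A A).hom) ≫ (α_ (Q.obj A) A A).inv ≫
      (d A ▷ A) ≫ d A = (d A ▷ A) ≫ d A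

/-- A deriving transformation: a natural `d : !A ⊗ A ⟶ !A` satisfying
[d.1]–[d.5]. -/
def IsDerivingTransformation (d : ∀ A : C, Q.obj A ⊗ A ⟶ Q.obj A) : Prop :=
  DerivNatural Q d ∧ ConstantRule Q d ∧ LeibnizRule Q d ∧ LinearRule Q d ∧
    ChainRule Q d ∧ InterchangeRule Q d

/-- The ∇-rule [d.∇] : `(∇ ⊗ 1) ; d = (1 ⊗ d) ; ∇`. -/
def NablaRule (mul : ∀ A : C, Q.obj A ⊗ Q.obj A ⟶ Q.obj A)
    (d : ∀ A : C, Q.obj A ⊗ A ⟶ Q.obj A) : Prop :=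
  ∀ A : C, (mul A ▷ A) ≫ d A =
    (α_ (Q.obj A) (Q.obj A) A).hom ≫ (Q.obj A ◁ d A) ≫ mul A

/-- The monoidal rule [d.m] for a deriving transformation :
`(1 ⊗ d) ; m⊗ = (Δ ⊗ 1 ⊗ 1) ; (1 ⊗ σ ⊗ 1) ; (m⊗ ⊗ ε ⊗ 1) ; d`. -/
def DerivMonoidalRule (mT : ∀ A B : C, Q.obj A ⊗ Q.obj B ⟶ Q.obj (A ⊗ B))
    (d : ∀ A : C, Q.obj A ⊗ A ⟶ Q.obj A) : Prop :=
  ∀ A B : C,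
    (α_ (Q.obj A) (Q.obj B) B).hom ≫ (Q.obj A ◁ d B) ≫ mT A B =
      ((Q.Δ A ▷ Q.obj B) ▷ B) ≫ ((α_ (Q.obj A) (Q.obj A) (Q.obj B)).hom ▷ B) ≫
        ((Q.obj A ◁ (β_ (Q.obj A) (Q.obj B)).hom) ▷ B) ≫
        ((α_ (Q.obj A) (Q.obj B) (Q.obj A)).inv ▷ B) ≫
        (α_ (Q.obj A ⊗ Q.obj B) (Q.obj A) B).hom ≫
        (mT A B ⊗ₘ (Q.ε A ▷ B)) ≫ d (A ⊗ B)

/-- `η : A ⟶ !A` is a natural transformation. -/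
def CoderNatural (η : ∀ A : C, A ⟶ Q.obj A) : Prop :=
  ∀ {A B : C} (f : A ⟶ B), f ≫ η B = η A ≫ Q.map f

/-- The constant rule [dC.1] : `η ; e = 0`. -/
def CoderConstantRule (η : ∀ A : C, A ⟶ Q.obj A) : Prop :=
  ∀ A : C, η A ≫ Q.e A = 0

/-- The product rule [dC.2] : `η ; Δ = η ⊗ u + u ⊗ η`. -/
def CoderProductRule (unit : ∀ A : C, 𝟙_ C ⟶ Q.obj A)
    (η : ∀ A : C, A ⟶ Q.obj A) : Prop :=
  ∀ A : C, η A ≫ Q.Δ A =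
    (ρ_ A).inv ≫ (η A ⊗ₘ unit A) + (λ_ A).inv ≫ (unit A ⊗ₘ η A)

/-- The linear rule [dC.3] : `η ; ε = 1`. -/
def CoderLinearRule (η : ∀ A : C, A ⟶ Q.obj A) : Prop :=
  ∀ A : C, η A ≫ Q.ε A = 𝟙 A

/-- The chain rule [dC.4] :
`(1 ⊗ η) ; ∇ ; δ = (Δ ⊗ η) ; (1 ⊗ ∇) ; (δ ⊗ η) ; ∇`. -/
def CoderChainRule (mul : ∀ A : C, Q.obj A ⊗ Q.obj A ⟶ Q.obj A)
    (η : ∀ A : C, A ⟶ Q.obj A) : Prop :=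
  ∀ A : C, (Q.obj A ◁ η A) ≫ mul A ≫ Q.δ A =
    (Q.Δ A ⊗ₘ η A) ≫ (α_ (Q.obj A) (Q.obj A) (Q.obj A)).hom ≫ (Q.obj A ◁ mul A) ≫
      (Q.δ A ⊗ₘ η (Q.obj A)) ≫ mul (Q.obj A)

/-- The alternative chain rule [dC.4'] : `η ; δ = (u ⊗ η) ; (δ ⊗ η) ; ∇`. -/
def CoderAltChainRule (mul : ∀ A : C, Q.obj A ⊗ Q.obj A ⟶ Q.obj A)
    (unit : ∀ A : C, 𝟙_ C ⟶ Q.obj A) (η : ∀ A : C, A ⟶ Q.obj A) : Prop :=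
  ∀ A : C, η A ≫ Q.δ A =
    (λ_ A).inv ≫ (unit A ⊗ₘ η A) ≫ (Q.δ A ⊗ₘ η (Q.obj A)) ≫ mul (Q.obj A)

/-- The monoidal rule [dC.m] : `(1 ⊗ η) ; m⊗ = (ε ⊗ 1) ; η`. -/
def CoderMonoidalRule (mT : ∀ A B : C, Q.obj A ⊗ Q.obj B ⟶ Q.obj (A ⊗ B))
    (η : ∀ A : C, A ⟶ Q.obj A) : Prop :=
  ∀ A B : C, (Q.obj A ◁ η B) ≫ mT A B = (Q.ε A ▷ B) ≫ η (A ⊗ B)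

/-- A codereliction: a natural `η : A ⟶ !A` satisfying [dC.1]–[dC.4]. -/
def IsCodereliction (mul : ∀ A : C, Q.obj A ⊗ Q.obj A ⟶ Q.obj A)
    (unit : ∀ A : C, 𝟙_ C ⟶ Q.obj A) (η : ∀ A : C, A ⟶ Q.obj A) : Prop :=
  CoderNatural Q η ∧ CoderConstantRule Q η ∧ CoderProductRule Q unit η ∧
    CoderLinearRule Q η ∧ CoderChainRule Q mul η

end Rules

end Additive

/-- For any coalgebra modality `(!, δ, ε, Δ, e)` on a symmetric monoidal category,
`δ ; e = e`, and consequently each `δ : !A ⟶ !!A` is a comonoid morphism from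
`(!A, Δ, e)` to `(!!A, Δ, e)`. -/
theorem coalgebraModality_delta_comonoid_morphism
    {C : Type u} [Category.{v} C] [MonoidalCategory C] [SymmetricCategory C]
    (Q : CoalgebraModality C) :
    (∀ A : C, Q.δ A ≫ Q.e (Q.obj A) = Q.e A) ∧
      (∀ A : C, Q.δ A ≫ Q.Δ (Q.obj A) = Q.Δ A ≫ (Q.δ A ⊗ₘ Q.δ A)) := by
  refine ⟨fun A => ?_, Q.δ_comul⟩
  rw [← Q.e_natural (Q.ε A), ← Category.assoc, Q.δ_map_counit, Category.id_comp]
end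

section
/- In an additive linear category with monoidal coalgebra modality (!, δ, ε, m⊗, m_K, Δ, e) and induced bialgebra structure ∇ := (δ ⊗ δ) ; m⊗ ; !(ε ⊗ e + e ⊗ ε), u := m_K ; !(0), the maps u and ∇ are !-coalgebra morphisms, and moreover the following hold: (i) ∇ ; δ = (δ ⊗ δ) ; m⊗ ; !(∇) : !A ⊗ !A → !!A; (ii) u ; δ = m_K ; !(u) : K → !!A; (iii) (1 ⊗ u) ; m⊗ = e ; u : !A → !(A ⊗ B); (iv) (1 ⊗ ∇) ; m⊗ = (Δ ⊗ 1 ⊗ 1) ; (1 ⊗ σ ⊗ 1) ; (m⊗ ⊗ m⊗) ; ∇ : !A ⊗ !B ⊗ !B → !(A ⊗ B). -/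
open CategoryTheory MonoidalCategory

universe v u

section AuxNonAdditive

variable {C : Type u} [Category.{v} C] [MonoidalCategory C] [SymmetricCategory C]

theorem mswap_eq_tensorμ (X Y Z W : C) : mswap X Y Z W = tensorμ X Y Z W := rfl

theorem tensorμ_tensorμ (X Y Z W : C) :
    tensorμ X Y Z W ≫ tensorμ X Z Y W = 𝟙 _ := by
  have h : tensorμ X Z Y W = tensorδ X Y Z W := by
    simp [tensorμ, tensorδ, SymmetricCategory.braiding_swap_eq_inv_braiding]
  rw [h, tensorμ_tensorδ]

theorem tensor_comp_right {X Y Z Z' Z'' : C} (f : X ⟶ Y) (g : Z ⟶ Z') (h : Z' ⟶ Z'') :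
    f ⊗ₘ (g ≫ h) = (f ⊗ₘ g) ≫ (Y ◁ h) := by
  simpa using (MonoidalCategory.tensorHom_comp_tensorHom f g (𝟙 Y) h).symm

theorem comp_tensor_right {X Y Y' Z W : C} (f : X ⟶ Y) (h : Y ⟶ Y') (g : Z ⟶ W) :
    (f ≫ h) ⊗ₘ g = (f ⊗ₘ g) ≫ (h ▷ W) := by
  simpa using (MonoidalCategory.tensorHom_comp_tensorHom f g h (𝟙 W)).symm

theorem tensor_comp₃ {X₁ X₂ X₃ X₄ Y₁ Y₂ Y₃ Y₄ : C}
    (f₁ : X₁ ⟶ X₂) (f₂ : X₂ ⟶ X₃) (f₃ : X₃ ⟶ X₄)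
    (g₁ : Y₁ ⟶ Y₂) (g₂ : Y₂ ⟶ Y₃) (g₃ : Y₃ ⟶ Y₄) :
    (f₁ ≫ f₂ ≫ f₃) ⊗ₘ (g₁ ≫ g₂ ≫ g₃) = (f₁ ⊗ₘ g₁) ≫ (f₂ ⊗ₘ g₂) ≫ (f₃ ⊗ₘ g₃) := by
  rw [← MonoidalCategory.tensorHom_comp_tensorHom, ← MonoidalCategory.tensorHom_comp_tensorHom]

variable (Q : CoalgebraModality C)
  (mT : ∀ A B : C, Q.obj A ⊗ Q.obj B ⟶ Q.obj (A ⊗ B))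
  (mK : 𝟙_ C ⟶ Q.obj (𝟙_ C))

theorem Qmap_hom_inv {A B : C} (i : A ≅ B) : Q.map i.hom ≫ Q.map i.inv = 𝟙 _ := by
  rw [← Q.map_comp, i.hom_inv_id, Q.map_id]

theorem mT_natural_left (hM : IsMonoidalCoalgebraModality Q mT mK)
    {A A' : C} (f : A ⟶ A') (B : C) :
    (Q.map f ▷ Q.obj B) ≫ mT A' B = mT A B ≫ Q.map (f ▷ B) := by
  have h := hM.mT_natural f (𝟙 B)
  rw [Q.map_id] at h
  simpa using h

theorem mT_natural_right (hM : IsMonoidalCoalgebraModality Q mT mK)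
    (A : C) {B B' : C} (g : B ⟶ B') :
    (Q.obj A ◁ Q.map g) ≫ mT A B' = mT A B ≫ Q.map (A ◁ g) := by
  have h := hM.mT_natural (𝟙 A) g
  rw [Q.map_id] at h
  simpa using h

theorem hP (hM : IsMonoidalCoalgebraModality Q mT mK) (Y Z W : C) :
    (Q.obj Y ◁ mT Z W) ≫ mT Y (Z ⊗ W) ≫
      Q.map ((α_ Y Z W).inv ≫ ((β_ Y Z).hom ▷ W) ≫ (α_ Z Y W).hom) =
      (α_ (Q.obj Y) (Q.obj Z) (Q.obj W)).inv ≫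
        ((β_ (Q.obj Y) (Q.obj Z)).hom ▷ Q.obj W) ≫
        (α_ (Q.obj Z) (Q.obj Y) (Q.obj W)).hom ≫
        (Q.obj Z ◁ mT Y W) ≫ mT Z (Y ⊗ W) := by
  have e1 : (Q.obj Y ◁ mT Z W) ≫ mT Y (Z ⊗ W) =
      (α_ (Q.obj Y) (Q.obj Z) (Q.obj W)).inv ≫ (mT Y Z ▷ Q.obj W) ≫
        mT (Y ⊗ Z) W ≫ Q.map (α_ Y Z W).hom := by
    rw [hM.mT_assoc Y Z W]
    simp
  rw [Q.map_comp, Q.map_comp, reassoc_of% e1]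
  have e2 := reassoc_of% (show Q.map (α_ Y Z W).hom ≫ Q.map (α_ Y Z W).inv = 𝟙 _ by
    rw [← Q.map_comp, Iso.hom_inv_id, Q.map_id])
  rw [e2]
  slice_lhs 3 4 => rw [← mT_natural_left Q mT mK hM (β_ Y Z).hom W]
  slice_lhs 2 3 => rw [← comp_whiskerRight, ← hM.mT_symm, comp_whiskerRight]
  slice_lhs 3 5 => rw [hM.mT_assoc Z Y W]

theorem hP2 (hM : IsMonoidalCoalgebraModality Q mT mK) (Y Z W : C) :
    (Q.obj Y ◁ mT Z W) ≫ mT Y (Z ⊗ W) ≫ Q.map (α_ Y Z W).inv ≫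
      Q.map ((β_ Y Z).hom ▷ W) ≫ Q.map (α_ Z Y W).hom =
      (α_ (Q.obj Y) (Q.obj Z) (Q.obj W)).inv ≫
        ((β_ (Q.obj Y) (Q.obj Z)).hom ▷ Q.obj W) ≫
        (α_ (Q.obj Z) (Q.obj Y) (Q.obj W)).hom ≫
        (Q.obj Z ◁ mT Y W) ≫ mT Z (Y ⊗ W) := by
  have h := hP Q mT mK hM Y Z W
  rw [Q.map_comp, Q.map_comp] at h
  exact h

set_option maxHeartbeats 1000000 in
theorem mT_tensorμ (hM : IsMonoidalCoalgebraModality Q mT mK) (X Y Z W : C) :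
    (mT X Y ⊗ₘ mT Z W) ≫ mT (X ⊗ Y) (Z ⊗ W) ≫ Q.map (tensorμ X Y Z W) =
      tensorμ (Q.obj X) (Q.obj Y) (Q.obj Z) (Q.obj W) ≫ (mT X Z ⊗ₘ mT Y W) ≫
        mT (X ⊗ Z) (Y ⊗ W) := by
  have htm : Q.map (tensorμ X Y Z W) = Q.map (α_ X Y (Z ⊗ W)).hom ≫
      Q.map (X ◁ (α_ Y Z W).inv) ≫ Q.map (X ◁ ((β_ Y Z).hom ▷ W)) ≫
      Q.map (X ◁ (α_ Z Y W).hom) ≫ Q.map (α_ X Z (Y ⊗ W)).inv := by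
    rw [← Q.map_comp, ← Q.map_comp, ← Q.map_comp, ← Q.map_comp]; rfl
  have htm2 : (α_ (Q.obj X) (Q.obj Y) (Q.obj Z ⊗ Q.obj W)).hom ≫
      (Q.obj X ◁ (α_ (Q.obj Y) (Q.obj Z) (Q.obj W)).inv) ≫
      (Q.obj X ◁ ((β_ (Q.obj Y) (Q.obj Z)).hom ▷ Q.obj W)) ≫
      (Q.obj X ◁ (α_ (Q.obj Z) (Q.obj Y) (Q.obj W)).hom) =
      tensorμ (Q.obj X) (Q.obj Y) (Q.obj Z) (Q.obj W) ≫
        (α_ (Q.obj X) (Q.obj Z) (Q.obj Y ⊗ Q.obj W)).hom := by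
    simp [tensorμ]
  have hP3 := congrArg (fun t => Q.obj X ◁ t) (hP2 Q mT mK hM Y Z W)
  simp only [MonoidalCategory.whiskerLeft_comp] at hP3
  rw [htm, tensorHom_def']
  simp only [Category.assoc]
  rw [reassoc_of% (hM.mT_assoc X Y (Z ⊗ W))]
  rw [reassoc_of% ((mT_natural_right Q mT mK hM X ((α_ Y Z W).inv)).symm)]
  rw [reassoc_of% ((mT_natural_right Q mT mK hM X ((β_ Y Z).hom ▷ W)).symm)]
  rw [reassoc_of% ((mT_natural_right Q mT mK hM X ((α_ Z Y W).hom)).symm)]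
  rw [associator_naturality_right_assoc]
  rw [reassoc_of% hP3]
  rw [reassoc_of% htm2]
  rw [← associator_naturality_right_assoc]
  rw [reassoc_of% ((hM.mT_assoc X Z (Y ⊗ W)).symm)]
  rw [Qmap_hom_inv Q (α_ X Z (Y ⊗ W)), Category.comp_id]
  rw [← tensorHom_def'_assoc]

end AuxNonAdditive

section AuxAdditive

variable {C : Type u} [Category.{v} C] [MonoidalCategory C] [SymmetricCategory C]
  [HomAddCommMonoid C] [AdditiveSymmetricMonoidal C]

theorem tensor_add {X Y Z W : C} (f : X ⟶ Y) (g h : Z ⟶ W) :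
    f ⊗ₘ (g + h) = f ⊗ₘ g + f ⊗ₘ h := by
  rw [MonoidalCategory.tensorHom_def, MonoidalCategory.tensorHom_def, MonoidalCategory.tensorHom_def,
    AdditiveSymmetricMonoidal.whiskerLeft_add, AdditiveSymmetricMonoidal.comp_add]

variable (Q : CoalgebraModality C)
  (mT : ∀ A B : C, Q.obj A ⊗ Q.obj B ⟶ Q.obj (A ⊗ B))
  (mK : 𝟙_ C ⟶ Q.obj (𝟙_ C))

theorem comul_eps_e (A : C) : Q.Δ A ≫ (Q.ε A ⊗ₘ Q.e A) = Q.ε A ≫ (ρ_ A).inv := by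
  rw [tensorHom_def', reassoc_of% (Q.counit_comul A), rightUnitor_inv_naturality]

theorem comul_e_eps (A : C) : Q.Δ A ≫ (Q.e A ⊗ₘ Q.ε A) = Q.ε A ≫ (λ_ A).inv := by
  rw [MonoidalCategory.tensorHom_def, reassoc_of% (Q.comul_counit A), leftUnitor_inv_naturality]

theorem map_zero_eq (hM : IsMonoidalCoalgebraModality Q mT mK) (A B : C) :
    Q.map (0 : A ⟶ B) = Q.e A ≫ mK ≫ Q.map (0 : 𝟙_ C ⟶ B) := by
  have h0 : (0 : Q.obj A ⟶ B) = Q.ε A ≫ (0 : A ⟶ B) :=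
    (AdditiveSymmetricMonoidal.comp_zero _).symm
  rw [reassoc_of% (hM.e_coalgebra_morphism A), ← Q.map_comp,
    AdditiveSymmetricMonoidal.comp_zero, h0, Q.map_comp,
    reassoc_of% (Q.δ_map_counit A)]

theorem unit_delta (hM : IsMonoidalCoalgebraModality Q mT mK) (A : C) :
    inducedUnit Q mK A ≫ Q.δ A = mK ≫ Q.map (inducedUnit Q mK A) := by
  simp only [inducedUnit, Category.assoc]
  rw [Q.δ_natural, reassoc_of% hM.δ_monoidal_unit, ← Q.map_comp]

theorem unit_mT (hM : IsMonoidalCoalgebraModality Q mT mK) (A B : C) :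
    (ρ_ (Q.obj A)).inv ≫ (Q.obj A ◁ inducedUnit Q mK B) ≫ mT A B =
      Q.e A ≫ inducedUnit Q mK (A ⊗ B) := by
  simp only [inducedUnit, MonoidalCategory.whiskerLeft_comp, Category.assoc]
  rw [mT_natural_right Q mT mK hM A (0 : 𝟙_ C ⟶ B),
    AdditiveSymmetricMonoidal.whiskerLeft_zero,
    show (0 : A ⊗ 𝟙_ C ⟶ A ⊗ B) = (ρ_ A).hom ≫ (0 : A ⟶ A ⊗ B) from
      (AdditiveSymmetricMonoidal.comp_zero _).symm,
    Q.map_comp, reassoc_of% (hM.mT_right_unit A), Iso.inv_hom_id_assoc]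
  exact map_zero_eq Q mT mK hM A (A ⊗ B)

theorem mul_delta (hM : IsMonoidalCoalgebraModality Q mT mK) (A : C) :
    inducedMul Q mT A ≫ Q.δ A =
      (Q.δ A ⊗ₘ Q.δ A) ≫ mT (Q.obj A) (Q.obj A) ≫ Q.map (inducedMul Q mT A) := by
  simp only [inducedMul, Category.assoc]
  rw [Q.δ_natural (Q.phi A), reassoc_of% (hM.δ_monoidal (Q.obj A) (Q.obj A)),
    MonoidalCategory.tensorHom_comp_tensorHom_assoc, Q.δ_assoc,
    ← MonoidalCategory.tensorHom_comp_tensorHom_assoc,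
    reassoc_of% (hM.mT_natural (Q.δ A) (Q.δ A)),
    ← Q.map_comp, ← Q.map_comp]

set_option maxHeartbeats 1000000 in
theorem key_inner (hM : IsMonoidalCoalgebraModality Q mT mK) (A B : C) :
    (Q.Δ A ⊗ₘ 𝟙 (Q.obj B ⊗ Q.obj B)) ≫
      tensorμ (Q.obj A) (Q.obj A) (Q.obj B) (Q.obj B) ≫
      (mT A B ⊗ₘ mT A B) ≫ Q.phi (A ⊗ B) =
      Q.ε A ⊗ₘ Q.phi B := by
  have c1 : ((ρ_ A).inv ▷ (B ⊗ 𝟙_ C)) ≫ tensorμ A (𝟙_ C) B (𝟙_ C) ≫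
      ((A ⊗ B) ◁ (λ_ (𝟙_ C)).hom) ≫ (ρ_ (A ⊗ B)).hom = A ◁ (ρ_ B).hom := by
    simp [tensorμ]; monoidal
  have c2 : ((λ_ A).inv ▷ (𝟙_ C ⊗ B)) ≫ tensorμ (𝟙_ C) A (𝟙_ C) B ≫
      ((λ_ (𝟙_ C)).hom ▷ (A ⊗ B)) ≫ (λ_ (A ⊗ B)).hom = A ◁ (λ_ B).hom := by
    simp [tensorμ]
  simp only [CoalgebraModality.phi]
  rw [AdditiveSymmetricMonoidal.comp_add, AdditiveSymmetricMonoidal.comp_add,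
    AdditiveSymmetricMonoidal.comp_add, tensor_add]
  congr 1
  · -- first summand
    rw [MonoidalCategory.tensorHom_comp_tensorHom_assoc, hM.ε_monoidal A B, hM.e_monoidal A B,
      tensor_comp_right (Q.ε A ⊗ₘ Q.ε B) (Q.e A ⊗ₘ Q.e B) (λ_ (𝟙_ C)).hom]
    simp only [Category.assoc]
    rw [← reassoc_of% (tensorμ_natural (Q.ε A) (Q.e A) (Q.ε B) (Q.e B))]
    rw [MonoidalCategory.tensorHom_comp_tensorHom_assoc, Category.id_comp,
      comul_eps_e Q A, comp_tensor_right (Q.ε A) ((ρ_ A).inv) (Q.ε B ⊗ₘ Q.e B)]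
    simp only [Category.assoc]
    rw [c1, ← tensor_comp_right]
  · -- second summand
    rw [MonoidalCategory.tensorHom_comp_tensorHom_assoc, hM.ε_monoidal A B, hM.e_monoidal A B,
      comp_tensor_right (Q.e A ⊗ₘ Q.e B) (λ_ (𝟙_ C)).hom (Q.ε A ⊗ₘ Q.ε B)]
    simp only [Category.assoc]
    rw [← reassoc_of% (tensorμ_natural (Q.e A) (Q.ε A) (Q.e B) (Q.ε B))]
    rw [MonoidalCategory.tensorHom_comp_tensorHom_assoc, Category.id_comp,
      comul_e_eps Q A, comp_tensor_right (Q.ε A) ((λ_ A).inv) (Q.e B ⊗ₘ Q.ε B)]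
    simp only [Category.assoc]
    rw [c2, ← tensor_comp_right]

set_option maxHeartbeats 1000000 in
theorem mul_mT (hM : IsMonoidalCoalgebraModality Q mT mK) (A B : C) :
    (Q.obj A ◁ inducedMul Q mT B) ≫ mT A B =
      (Q.Δ A ▷ (Q.obj B ⊗ Q.obj B)) ≫
        mswap (Q.obj A) (Q.obj A) (Q.obj B) (Q.obj B) ≫
        (mT A B ⊗ₘ mT A B) ≫ inducedMul Q mT (A ⊗ B) := by
  rw [mswap_eq_tensorμ]
  simp only [inducedMul, MonoidalCategory.whiskerLeft_comp, Category.assoc]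
  -- RHS reduction
  conv_rhs => simp only [Category.assoc]
  conv_rhs => rw [MonoidalCategory.tensorHom_comp_tensorHom_assoc, hM.δ_monoidal A B,
    tensor_comp₃ (Q.δ A ⊗ₘ Q.δ B) (mT (Q.obj A) (Q.obj B)) (Q.map (mT A B))
      (Q.δ A ⊗ₘ Q.δ B) (mT (Q.obj A) (Q.obj B)) (Q.map (mT A B))]
  conv_rhs => simp only [Category.assoc]
  conv_rhs => rw [reassoc_of% (hM.mT_natural (mT A B) (mT A B))]
  conv_rhs => simp only [Category.assoc]
  conv_rhs => rw [show Q.map (mT A B ⊗ₘ mT A B) =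
      Q.map (tensorμ (Q.obj A) (Q.obj B) (Q.obj A) (Q.obj B)) ≫
      Q.map (tensorμ (Q.obj A) (Q.obj A) (Q.obj B) (Q.obj B)) ≫
      Q.map (mT A B ⊗ₘ mT A B) from by
    rw [← Q.map_comp, ← Q.map_comp,
      reassoc_of% (tensorμ_tensorμ (Q.obj A) (Q.obj B) (Q.obj A) (Q.obj B))]]
  conv_rhs => simp only [Category.assoc]
  conv_rhs => rw [reassoc_of%
    (mT_tensorμ Q mT mK hM (Q.obj A) (Q.obj B) (Q.obj A) (Q.obj B))]
  conv_rhs => simp only [Category.assoc]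
  conv_rhs => rw [← reassoc_of% (tensorμ_natural (Q.δ A) (Q.δ A) (Q.δ B) (Q.δ B)),
    reassoc_of% (tensorμ_tensorμ (Q.obj (Q.obj A)) (Q.obj (Q.obj A))
      (Q.obj (Q.obj B)) (Q.obj (Q.obj B)))]
  -- collapse Δ with δ's and mT's
  conv_rhs => simp only [Category.assoc]
  conv_rhs => rw [← tensorHom_id (Q.Δ A) (Q.obj B ⊗ Q.obj B),
    ← reassoc_of% (tensor_comp₃ (Q.Δ A) (Q.δ A ⊗ₘ Q.δ A)
      (mT (Q.obj A) (Q.obj A)) (𝟙 (Q.obj B ⊗ Q.obj B)) (Q.δ B ⊗ₘ Q.δ B)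
      (mT (Q.obj B) (Q.obj B))),
    hM.Δ_coalgebra_morphism A,
    comp_tensor_right (Q.δ A) (Q.map (Q.Δ A))
      ((Q.δ B ⊗ₘ Q.δ B) ≫ mT (Q.obj B) (Q.obj B))]
  conv_rhs => simp only [Category.assoc]
  conv_rhs => rw [reassoc_of%
    (mT_natural_left Q mT mK hM (Q.Δ A) (Q.obj B ⊗ Q.obj B))]
  -- merge everything under Q.map and apply key_inner
  conv_rhs => simp only [Category.assoc]
  conv_rhs => rw [← Q.map_comp, ← Q.map_comp, ← Q.map_comp]
  have hkey : (Q.Δ A ▷ (Q.obj B ⊗ Q.obj B)) ≫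
      tensorμ (Q.obj A) (Q.obj A) (Q.obj B) (Q.obj B) ≫
      (mT A B ⊗ₘ mT A B) ≫ Q.phi (A ⊗ B) = Q.ε A ⊗ₘ Q.phi B := by
    rw [← tensorHom_id (Q.Δ A) (Q.obj B ⊗ Q.obj B)]
    exact key_inner Q mT mK hM A B
  conv_rhs => simp only [Category.assoc]
  conv_rhs => rw [show (Q.Δ A ▷ (Q.obj B ⊗ Q.obj B)) ≫
      (tensorμ (Q.obj A) (Q.obj A) (Q.obj B) (Q.obj B) ≫
      ((mT A B ⊗ₘ mT A B) ≫ Q.phi (A ⊗ B))) = Q.ε A ⊗ₘ Q.phi B from by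
    rw [← hkey]]
  conv_rhs => simp only [Category.assoc]
  conv_rhs => rw [show Q.map (Q.ε A ⊗ₘ Q.phi B) =
      Q.map (Q.ε A ▷ (Q.obj B ⊗ Q.obj B)) ≫ Q.map (A ◁ Q.phi B) from by
    rw [← Q.map_comp, ← MonoidalCategory.tensorHom_def]]
  conv_rhs => simp only [Category.assoc]
  conv_rhs => rw [← reassoc_of%
    (mT_natural_left Q mT mK hM (Q.ε A) (Q.obj B ⊗ Q.obj B))]
  conv_rhs => simp only [Category.assoc]
  conv_rhs => rw [← reassoc_of% (comp_tensor_right (Q.δ A) (Q.map (Q.ε A))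
      ((Q.δ B ⊗ₘ Q.δ B) ≫ mT (Q.obj B) (Q.obj B))),
    Q.δ_map_counit A, id_tensorHom]
  -- LHS
  rw [mT_natural_right Q mT mK hM A (Q.phi B)]
  simp only [MonoidalCategory.whiskerLeft_comp, Category.assoc]

end AuxAdditive

/-- In an additive linear category with induced `∇` and `u`: both are `!`-coalgebra
morphisms, and moreover:
(i) `∇ ; δ = (δ ⊗ δ) ; m⊗ ; !(∇)`;
(ii) `u ; δ = m_K ; !(u)`;
(iii) `(1 ⊗ u) ; m⊗ = e ; u`;
(iv) `(1 ⊗ ∇) ; m⊗ = (Δ ⊗ 1 ⊗ 1) ; (1 ⊗ σ ⊗ 1) ; (m⊗ ⊗ m⊗) ; ∇`. -/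
theorem inducedMul_inducedUnit_coalgebra_morphisms
    {C : Type u} [Category.{v} C] [MonoidalCategory C] [SymmetricCategory C]
    [HomAddCommMonoid C] [AdditiveSymmetricMonoidal C]
    (Q : CoalgebraModality C)
    (mT : ∀ A B : C, Q.obj A ⊗ Q.obj B ⟶ Q.obj (A ⊗ B))
    (mK : 𝟙_ C ⟶ Q.obj (𝟙_ C))
    (hM : IsMonoidalCoalgebraModality Q mT mK) :
    (∀ A : C,
      inducedMul Q mT A ≫ Q.δ A =
        (Q.δ A ⊗ₘ Q.δ A) ≫ mT (Q.obj A) (Q.obj A) ≫ Q.map (inducedMul Q mT A)) ∧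
    (∀ A : C, inducedUnit Q mK A ≫ Q.δ A = mK ≫ Q.map (inducedUnit Q mK A)) ∧
    (∀ A B : C,
      (ρ_ (Q.obj A)).inv ≫ (Q.obj A ◁ inducedUnit Q mK B) ≫ mT A B =
        Q.e A ≫ inducedUnit Q mK (A ⊗ B)) ∧
    (∀ A B : C,
      (Q.obj A ◁ inducedMul Q mT B) ≫ mT A B =
        (Q.Δ A ▷ (Q.obj B ⊗ Q.obj B)) ≫
          mswap (Q.obj A) (Q.obj A) (Q.obj B) (Q.obj B) ≫
          (mT A B ⊗ₘ mT A B) ≫ inducedMul Q mT (A ⊗ B)) := by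
  refine ⟨mul_delta Q mT mK hM, unit_delta Q mT mK hM, unit_mT Q mT mK hM,
    mul_mT Q mT mK hM⟩
end

section
/- For a coalgebra modality (!, δ, ε, Δ, e) on an additive symmetric monoidal category, every natural transformation d : !A ⊗ A → !A satisfies the constant rule [d.1]: d ; e = 0 : !A ⊗ A → K. -/
open CategoryTheory MonoidalCategory

universe v u

/-- For a coalgebra modality on an additive symmetric monoidal category, any
natural transformation `d : !A ⊗ A ⟶ !A` satisfies the constant rule [d.1]. -/
theorem natural_transformation_satisfies_constant_rule
    {C : Type u} [Category.{v} C] [MonoidalCategory C] [SymmetricCategory C]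
    [HomAddCommMonoid C] [AdditiveSymmetricMonoidal C]
    (Q : CoalgebraModality C)
    (d : ∀ A : C, Q.obj A ⊗ A ⟶ Q.obj A)
    (hnat : DerivNatural Q d) :
    ConstantRule Q d := by
  intro A
  have h := hnat (0 : A ⟶ A)
  have h2 : (Q.map (0 : A ⟶ A) ⊗ₘ (0 : A ⟶ A)) ≫ d A ≫ Q.e A = d A ≫ Q.map 0 ≫ Q.e A := by
    rw [← Category.assoc, h, Category.assoc]
  have hz : (Q.map (0 : A ⟶ A) ⊗ₘ (0 : A ⟶ A)) = 0 := by
    rw [MonoidalCategory.tensorHom_def, AdditiveSymmetricMonoidal.whiskerLeft_zero,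
      AdditiveSymmetricMonoidal.comp_zero]
  rw [hz, AdditiveSymmetricMonoidal.zero_comp, Q.e_natural] at h2
  exact h2.symm
end

section
/- For a bialgebra modality (!, δ, ε, Δ, e, ∇, u) on an additive symmetric monoidal category, every natural transformation η : A → !A satisfies the constant rule [dC.1]: η ; e = 0 : A → K. -/
open CategoryTheory MonoidalCategory

universe v u

/-- For a bialgebra modality on an additive symmetric monoidal category, any
natural transformation `η : A ⟶ !A` satisfies the constant rule [dC.1]. -/
theorem natural_transformation_satisfies_coder_constant_rule
    {C : Type u} [Category.{v} C] [MonoidalCategory C] [SymmetricCategory C]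
    [HomAddCommMonoid C] [AdditiveSymmetricMonoidal C]
    (Q : CoalgebraModality C)
    (mul : ∀ A : C, Q.obj A ⊗ Q.obj A ⟶ Q.obj A)
    (unit : ∀ A : C, 𝟙_ C ⟶ Q.obj A)
    (h : IsBialgebraModality Q mul unit)
    (η : ∀ A : C, A ⟶ Q.obj A)
    (hnat : CoderNatural Q η) :
    CoderConstantRule Q η := by
  intro A
  calc η A ≫ Q.e A = η A ≫ (Q.map (0 : A ⟶ A) ≫ Q.e A) := by rw [Q.e_natural]
    _ = (η A ≫ Q.map (0 : A ⟶ A)) ≫ Q.e A := by rw [Category.assoc]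
    _ = ((0 : A ⟶ A) ≫ η A) ≫ Q.e A := by rw [hnat]
    _ = 0 := by rw [AdditiveSymmetricMonoidal.zero_comp, AdditiveSymmetricMonoidal.zero_comp]
end

section
/- For a bialgebra modality (!, δ, ε, Δ, e, ∇, u), any natural transformation d : !A ⊗ A → !A satisfying the ∇-rule [d.∇] also satisfies the interchange rule [d.5]: (1 ⊗ σ) ; (d ⊗ 1) ; d = (d ⊗ 1) ; d as maps !A ⊗ A ⊗ A → !A. -/
open CategoryTheory MonoidalCategory

universe v u

/-- For a bialgebra modality, any natural transformation `d : !A ⊗ A ⟶ !A`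
satisfying the ∇-rule [d.∇] also satisfies the interchange rule [d.5]. -/
theorem nabla_rule_implies_interchange
    {C : Type u} [Category.{v} C] [MonoidalCategory C] [SymmetricCategory C]
    [HomAddCommMonoid C] [AdditiveSymmetricMonoidal C]
    (Q : CoalgebraModality C)
    (mul : ∀ A : C, Q.obj A ⊗ Q.obj A ⟶ Q.obj A)
    (unit : ∀ A : C, 𝟙_ C ⟶ Q.obj A)
    (h : IsBialgebraModality Q mul unit)
    (d : ∀ A : C, Q.obj A ⊗ A ⟶ Q.obj A)
    (hnat : DerivNatural Q d)
    (hnabla : NablaRule Q mul d) :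
    InterchangeRule Q d := by
  intro A
  set η : A ⟶ Q.obj A := (λ_ A).inv ≫ (unit A ▷ A) ≫ d A with hη
  -- Step 1: d = (1 ◁ η) ≫ ∇
  have hd : d A = (Q.obj A ◁ η) ≫ mul A := by
    have hn := hnabla A
    have hrev : (Q.obj A ◁ d A) ≫ mul A
        = (α_ (Q.obj A) (Q.obj A) A).inv ≫ (mul A ▷ A) ≫ d A := by
      rw [hn]; simp
    calc d A = ((ρ_ (Q.obj A)).inv ▷ A) ≫ ((ρ_ (Q.obj A)).hom ▷ A) ≫ d A := by simp
      _ = ((ρ_ (Q.obj A)).inv ▷ A) ≫ (((Q.obj A ◁ unit A) ≫ mul A) ▷ A) ≫ d A := by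
          rw [h.mul_one A]
      _ = (Q.obj A ◁ (λ_ A).inv) ≫ (α_ (Q.obj A) (𝟙_ C) A).inv ≫
            ((Q.obj A ◁ unit A) ▷ A) ≫ (mul A ▷ A) ≫ d A := by
          simp [MonoidalCategory.comp_whiskerRight]
      _ = (Q.obj A ◁ (λ_ A).inv) ≫ (Q.obj A ◁ (unit A ▷ A)) ≫
            (α_ (Q.obj A) (Q.obj A) A).inv ≫ (mul A ▷ A) ≫ d A := by
          rw [← MonoidalCategory.associator_inv_naturality_middle_assoc]
      _ = (Q.obj A ◁ (λ_ A).inv) ≫ (Q.obj A ◁ (unit A ▷ A)) ≫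
            (Q.obj A ◁ d A) ≫ mul A := by rw [hrev]
      _ = (Q.obj A ◁ η) ≫ mul A := by
          simp [hη, MonoidalCategory.whiskerLeft_comp]
  -- Step 2: (d ▷ A) ≫ d = ((1 ◁ η) ⊗ₘ η) ≫ α ≫ (1 ◁ ∇) ≫ ∇
  have key : (d A ▷ A) ≫ d A =
      ((Q.obj A ◁ η) ⊗ₘ η) ≫ (α_ (Q.obj A) (Q.obj A) (Q.obj A)).hom ≫
        (Q.obj A ◁ mul A) ≫ mul A := by
    calc (d A ▷ A) ≫ d A = (d A ▷ A) ≫ (Q.obj A ◁ η) ≫ mul A := by rw [← hd]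
      _ = (d A ⊗ₘ η) ≫ mul A := by rw [← MonoidalCategory.tensorHom_def_assoc]
      _ = ((Q.obj A ⊗ A) ◁ η) ≫ (d A ▷ Q.obj A) ≫ mul A := by
          rw [MonoidalCategory.tensorHom_def'_assoc]
      _ = ((Q.obj A ⊗ A) ◁ η) ≫ ((Q.obj A ◁ η) ▷ Q.obj A) ≫
            (mul A ▷ Q.obj A) ≫ mul A := by
          rw [hd, MonoidalCategory.comp_whiskerRight, Category.assoc]
      _ = ((Q.obj A ⊗ A) ◁ η) ≫ ((Q.obj A ◁ η) ▷ Q.obj A) ≫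
            (α_ (Q.obj A) (Q.obj A) (Q.obj A)).hom ≫ (Q.obj A ◁ mul A) ≫ mul A := by
          rw [h.mul_assoc A]
      _ = ((Q.obj A ◁ η) ⊗ₘ η) ≫ (α_ (Q.obj A) (Q.obj A) (Q.obj A)).hom ≫
            (Q.obj A ◁ mul A) ≫ mul A := by
          rw [← MonoidalCategory.tensorHom_def'_assoc]
  rw [key]
  -- Step 3: move the braiding past (η ⊗ₘ η) and kill it by commutativity of ∇
  have hassoc : ((Q.obj A ◁ η) ⊗ₘ η) ≫ (α_ (Q.obj A) (Q.obj A) (Q.obj A)).hom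
      = (α_ (Q.obj A) A A).hom ≫ (Q.obj A ◁ (η ⊗ₘ η)) := by
    have := MonoidalCategory.associator_naturality (𝟙 (Q.obj A)) η η
    simpa using this
  have hbraid : (β_ A A).hom ≫ (η ⊗ₘ η) = (η ⊗ₘ η) ≫ (β_ (Q.obj A) (Q.obj A)).hom := by
    simpa using (BraidedCategory.braiding_naturality η η).symm
  calc (α_ (Q.obj A) A A).hom ≫ (Q.obj A ◁ (β_ A A).hom) ≫ (α_ (Q.obj A) A A).inv ≫
        ((Q.obj A ◁ η) ⊗ₘ η) ≫ (α_ (Q.obj A) (Q.obj A) (Q.obj A)).hom ≫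
        (Q.obj A ◁ mul A) ≫ mul A
      = (α_ (Q.obj A) A A).hom ≫ (Q.obj A ◁ (β_ A A).hom) ≫ (α_ (Q.obj A) A A).inv ≫
        (α_ (Q.obj A) A A).hom ≫ (Q.obj A ◁ (η ⊗ₘ η)) ≫
        (Q.obj A ◁ mul A) ≫ mul A := by rw [reassoc_of% hassoc]
    _ = (α_ (Q.obj A) A A).hom ≫ (Q.obj A ◁ ((β_ A A).hom ≫ (η ⊗ₘ η) ≫ mul A)) ≫
        mul A := by simp [MonoidalCategory.whiskerLeft_comp]
    _ = (α_ (Q.obj A) A A).hom ≫ (Q.obj A ◁ ((η ⊗ₘ η) ≫ mul A)) ≫ mul A := by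
        rw [reassoc_of% hbraid, h.mul_comm A]
    _ = ((Q.obj A ◁ η) ⊗ₘ η) ≫ (α_ (Q.obj A) (Q.obj A) (Q.obj A)).hom ≫
        (Q.obj A ◁ mul A) ≫ mul A := by
        simp only [MonoidalCategory.whiskerLeft_comp, reassoc_of% hassoc,
          Category.assoc]
end

section
/- For a bialgebra modality (!, δ, ε, Δ, e, ∇, u), any natural transformation η : A → !A satisfying the chain rule [dC.4] also satisfies the alternative chain rule [dC.4']: η ; δ = (u ⊗ η) ; (δ ⊗ η) ; ∇ as maps A → !!A (where the second η occurrence is η at the object !A, so δ ⊗ η : !A ⊗ !A → !!A ⊗ !!A and the final ∇ is at !A). -/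
open CategoryTheory MonoidalCategory

universe v u

/-- For a bialgebra modality, any natural transformation `η : A ⟶ !A` satisfying
the chain rule [dC.4] also satisfies the alternative chain rule [dC.4']. -/
theorem coder_chain_rule_implies_alt_chain_rule
    {C : Type u} [Category.{v} C] [MonoidalCategory C] [SymmetricCategory C]
    [HomAddCommMonoid C] [AdditiveSymmetricMonoidal C]
    (Q : CoalgebraModality C)
    (mul : ∀ A : C, Q.obj A ⊗ Q.obj A ⟶ Q.obj A)
    (unit : ∀ A : C, 𝟙_ C ⟶ Q.obj A)
    (h : IsBialgebraModality Q mul unit)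
    (η : ∀ A : C, A ⟶ Q.obj A)
    (hnat : CoderNatural Q η)
    (h4 : CoderChainRule Q mul η) :
    CoderAltChainRule Q mul unit η := by
  intro A
  have hmul_eta : (unit A ⊗ₘ η A) ≫ mul A = (λ_ A).hom ≫ η A := by
    rw [tensorHom_def']
    slice_lhs 2 3 => rw [h.one_mul]
    rw [leftUnitor_naturality]
  have e1 : (λ_ A).inv ≫ (unit A ▷ A) ≫ (Q.obj A ◁ η A) ≫ mul A ≫ Q.δ A
      = η A ≫ Q.δ A := by
    slice_lhs 2 3 => rw [← whisker_exchange]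
    slice_lhs 3 4 => rw [h.one_mul]
    slice_lhs 2 3 => rw [leftUnitor_naturality]
    simp
  have e2 : (unit A ▷ A) ≫ (Q.Δ A ⊗ₘ η A) ≫
        (α_ (Q.obj A) (Q.obj A) (Q.obj A)).hom ≫ (Q.obj A ◁ mul A)
      = unit A ⊗ₘ η A := by
    have h1 : (unit A ▷ A) ≫ (Q.Δ A ⊗ₘ η A)
        = (((λ_ (𝟙_ C)).inv ≫ (unit A ⊗ₘ unit A)) ⊗ₘ η A) := by
      rw [← tensorHom_id, tensorHom_comp_tensorHom, h.unit_comul, Category.id_comp]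
    rw [reassoc_of% h1]
    have h2 : (((λ_ (𝟙_ C)).inv ≫ (unit A ⊗ₘ unit A)) ⊗ₘ η A)
        = ((λ_ (𝟙_ C)).inv ⊗ₘ 𝟙 A) ≫ ((unit A ⊗ₘ unit A) ⊗ₘ η A) := by
      rw [tensorHom_comp_tensorHom]; simp
    rw [reassoc_of% h2, associator_naturality_assoc]
    have h3 : (unit A ⊗ₘ (unit A ⊗ₘ η A)) ≫ (Q.obj A ◁ mul A)
        = (𝟙_ C ◁ ((unit A ⊗ₘ η A) ≫ mul A)) ≫ (unit A ▷ Q.obj A) := by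
      rw [MonoidalCategory.tensorHom_def, Category.assoc, ← MonoidalCategory.whiskerLeft_comp,
        whisker_exchange]
    rw [h3, hmul_eta, MonoidalCategory.whiskerLeft_comp]
    have h4' : ((λ_ (𝟙_ C)).inv ⊗ₘ 𝟙 A) ≫ (α_ (𝟙_ C) (𝟙_ C) A).hom ≫
        (𝟙_ C ◁ (λ_ A).hom) = 𝟙 (𝟙_ C ⊗ A) := by
      coherence
    slice_lhs 1 3 => rw [h4']
    rw [Category.id_comp, ← tensorHom_def']
  rw [← e1, h4 A]
  slice_lhs 2 5 => rw [e2]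
  simp
end

section
/- Let (!, δ, ε, Δ, e, ∇, u) be an additive bialgebra modality and let η : A → !A be a natural transformation satisfying the linear rule [dC.3] (η ; ε = 1). Define p₀ := ε ⊗ e : !A ⊗ !B → A, p₁ := e ⊗ ε : !A ⊗ !B → B, i₀ := η ⊗ u : A → !A ⊗ !B, and i₁ := u ⊗ η : B → !A ⊗ !B. Then (!(i₀) ⊗ !(i₁)) ; ∇ ; Δ ; (!(p₀) ⊗ !(p₁)) = 1 as maps !A ⊗ !B → !A ⊗ !B (where ∇ and Δ in the middle are taken at the object !A ⊗ !B). -/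
open CategoryTheory MonoidalCategory

universe v u

section Aux

variable {C : Type u} [Category.{v} C] [MonoidalCategory C] [SymmetricCategory C]
  [HomAddCommMonoid C] [AdditiveSymmetricMonoidal C]

lemma aux_zero_tensorHom {X Y Z W : C} (g : Z ⟶ W) : ((0 : X ⟶ Y) ⊗ₘ g) = 0 := by
  rw [MonoidalCategory.tensorHom_def, AdditiveSymmetricMonoidal.zero_whiskerRight,
    AdditiveSymmetricMonoidal.zero_comp]

lemma aux_tensorHom_zero {X Y Z W : C} (f : X ⟶ Y) : (f ⊗ₘ (0 : Z ⟶ W)) = 0 := by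
  rw [MonoidalCategory.tensorHom_def, AdditiveSymmetricMonoidal.whiskerLeft_zero,
    AdditiveSymmetricMonoidal.comp_zero]

lemma aux_unit_eps (Q : CoalgebraModality C)
    (mul : ∀ A : C, Q.obj A ⊗ Q.obj A ⟶ Q.obj A)
    (unit : ∀ A : C, 𝟙_ C ⟶ Q.obj A)
    (hb : IsBialgebraModality Q mul unit)
    (hzero : ∀ A B : C, Q.map (0 : A ⟶ B) = Q.e A ≫ unit B) (A : C) :
    unit A ≫ Q.ε A = 0 := by
  have h0 := Q.ε_natural (0 : A ⟶ A)
  rw [hzero, AdditiveSymmetricMonoidal.comp_zero, Category.assoc] at h0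
  have h1 := congrArg (fun t => unit A ≫ t) h0
  simp only [← Category.assoc, hb.unit_counit A, Category.id_comp,
    AdditiveSymmetricMonoidal.comp_zero] at h1
  exact h1

lemma aux_unit_coherence (X Y : C) :
    ((ρ_ X).inv ⊗ₘ (λ_ Y).inv) ≫ tensorμ X (𝟙_ C) (𝟙_ C) Y ≫ ((ρ_ X).hom ⊗ₘ (λ_ Y).hom) =
      𝟙 (X ⊗ Y) := by
  have hβ : (β_ (𝟙_ C) (𝟙_ C)).hom = 𝟙 (𝟙_ C ⊗ 𝟙_ C) := by
    have := braiding_leftUnitor (C := C) (𝟙_ C)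
    rw [MonoidalCategory.unitors_equal] at this
    simpa using congrArg (fun t => t ≫ (ρ_ (𝟙_ C)).inv) this
  simp only [tensorμ, hβ]
  coherence

end Aux

/-- For an additive bialgebra modality and a natural `η : A ⟶ !A` satisfying the
linear rule [dC.3], with `p₀ := ε ⊗ e`, `p₁ := e ⊗ ε`, `i₀ := η ⊗ u`,
`i₁ := u ⊗ η`, one has `(!(i₀) ⊗ !(i₁)) ; ∇ ; Δ ; (!(p₀) ⊗ !(p₁)) = 1`. -/
theorem seely_like_identity
    {C : Type u} [Category.{v} C] [MonoidalCategory C] [SymmetricCategory C]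
    [HomAddCommMonoid C] [AdditiveSymmetricMonoidal C]
    (Q : CoalgebraModality C)
    (mul : ∀ A : C, Q.obj A ⊗ Q.obj A ⟶ Q.obj A)
    (unit : ∀ A : C, 𝟙_ C ⟶ Q.obj A)
    (h : IsAdditiveBialgebraModality Q mul unit)
    (η : ∀ A : C, A ⟶ Q.obj A)
    (hnat : CoderNatural Q η)
    (h3 : CoderLinearRule Q η) :
    ∀ A B : C,
      (Q.map ((ρ_ A).inv ≫ (η A ⊗ₘ unit B)) ⊗ₘ
          Q.map ((λ_ B).inv ≫ (unit A ⊗ₘ η B))) ≫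
        mul (Q.obj A ⊗ Q.obj B) ≫ Q.Δ (Q.obj A ⊗ Q.obj B) ≫
        (Q.map ((Q.ε A ⊗ₘ Q.e B) ≫ (ρ_ A).hom) ⊗ₘ
          Q.map ((Q.e A ⊗ₘ Q.ε B) ≫ (λ_ B).hom)) =
      𝟙 (Q.obj A ⊗ Q.obj B) := by
  obtain ⟨hb, hadd, hzero⟩ := h
  intro A B
  set X := Q.obj A ⊗ Q.obj B with hX
  set i0 : A ⟶ X := (ρ_ A).inv ≫ (η A ⊗ₘ unit B) with hi0
  set i1 : B ⟶ X := (λ_ B).inv ≫ (unit A ⊗ₘ η B) with hi1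
  set p0 : X ⟶ A := (Q.ε A ⊗ₘ Q.e B) ≫ (ρ_ A).hom with hp0
  set p1 : X ⟶ B := (Q.e A ⊗ₘ Q.ε B) ≫ (λ_ B).hom with hp1
  have f1 : i0 ≫ p0 = 𝟙 A := by
    rw [hi0, hp0, Category.assoc, tensorHom_comp_tensorHom_assoc, h3 A, hb.unit_counit B,
      id_tensorHom_id, Category.id_comp, Iso.inv_hom_id]
  have f4 : i1 ≫ p1 = 𝟙 B := by
    rw [hi1, hp1, Category.assoc, tensorHom_comp_tensorHom_assoc, h3 B, hb.unit_counit A,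
      id_tensorHom_id, Category.id_comp, Iso.inv_hom_id]
  have f2 : i1 ≫ p0 = 0 := by
    rw [hi1, hp0, Category.assoc, tensorHom_comp_tensorHom_assoc,
      aux_unit_eps Q mul unit hb hzero A, aux_zero_tensorHom,
      AdditiveSymmetricMonoidal.zero_comp, AdditiveSymmetricMonoidal.comp_zero]
  have f3 : i0 ≫ p1 = 0 := by
    rw [hi0, hp1, Category.assoc, tensorHom_comp_tensorHom_assoc,
      aux_unit_eps Q mul unit hb hzero B, aux_tensorHom_zero,
      AdditiveSymmetricMonoidal.zero_comp, AdditiveSymmetricMonoidal.comp_zero]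
  have fact0 : (Q.map i0 ⊗ₘ Q.map i1) ≫ (Q.map p0 ⊗ₘ Q.map p0) ≫ mul A =
      (Q.obj A ◁ Q.e B) ≫ (ρ_ (Q.obj A)).hom := by
    rw [tensorHom_comp_tensorHom_assoc, ← Q.map_comp, ← Q.map_comp, f1, f2, Q.map_id, hzero,
      id_tensorHom, MonoidalCategory.whiskerLeft_comp, Category.assoc, hb.mul_one]
  have fact1 : (Q.map i0 ⊗ₘ Q.map i1) ≫ (Q.map p1 ⊗ₘ Q.map p1) ≫ mul B =
      (Q.e A ▷ Q.obj B) ≫ (λ_ (Q.obj B)).hom := by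
    rw [tensorHom_comp_tensorHom_assoc, ← Q.map_comp, ← Q.map_comp, f3, f4, Q.map_id, hzero,
      tensorHom_id, MonoidalCategory.comp_whiskerRight, Category.assoc, hb.one_mul]
  have hms : mswap (Q.obj X) (Q.obj X) (Q.obj X) (Q.obj X) =
      tensorμ (Q.obj X) (Q.obj X) (Q.obj X) (Q.obj X) := rfl
  calc (Q.map i0 ⊗ₘ Q.map i1) ≫ mul X ≫ Q.Δ X ≫ (Q.map p0 ⊗ₘ Q.map p1)
      = (Q.map i0 ⊗ₘ Q.map i1) ≫ (Q.Δ X ⊗ₘ Q.Δ X) ≫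
          tensorμ (Q.obj X) (Q.obj X) (Q.obj X) (Q.obj X) ≫
          (mul X ⊗ₘ mul X) ≫ (Q.map p0 ⊗ₘ Q.map p1) := by
        rw [← Category.assoc (mul X), hb.mul_comul X, hms]
        simp only [Category.assoc]
    _ = (Q.Δ A ⊗ₘ Q.Δ B) ≫ ((Q.map i0 ⊗ₘ Q.map i0) ⊗ₘ (Q.map i1 ⊗ₘ Q.map i1)) ≫
          tensorμ (Q.obj X) (Q.obj X) (Q.obj X) (Q.obj X) ≫
          ((Q.map p0 ⊗ₘ Q.map p0) ≫ mul A ⊗ₘ (Q.map p1 ⊗ₘ Q.map p1) ≫ mul B) := by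
        rw [tensorHom_comp_tensorHom_assoc, Q.Δ_natural i0, Q.Δ_natural i1, ← tensorHom_comp_tensorHom_assoc,
          tensorHom_comp_tensorHom (mul X) (mul X) (Q.map p0) (Q.map p1),
          ← hb.mul_natural p0, ← hb.mul_natural p1]
    _ = (Q.Δ A ⊗ₘ Q.Δ B) ≫
          tensorμ (Q.obj A) (Q.obj A) (Q.obj B) (Q.obj B) ≫
          ((Q.map i0 ⊗ₘ Q.map i1) ≫ ((Q.map p0 ⊗ₘ Q.map p0) ≫ mul A) ⊗ₘ
            (Q.map i0 ⊗ₘ Q.map i1) ≫ ((Q.map p1 ⊗ₘ Q.map p1) ≫ mul B)) := by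
        rw [tensorμ_natural_assoc (Q.map i0) (Q.map i0) (Q.map i1) (Q.map i1),
          tensorHom_comp_tensorHom (Q.map i0 ⊗ₘ Q.map i1) (Q.map i0 ⊗ₘ Q.map i1)
            ((Q.map p0 ⊗ₘ Q.map p0) ≫ mul A) ((Q.map p1 ⊗ₘ Q.map p1) ≫ mul B)]
    _ = (Q.Δ A ⊗ₘ Q.Δ B) ≫
          tensorμ (Q.obj A) (Q.obj A) (Q.obj B) (Q.obj B) ≫
          (((Q.obj A ◁ Q.e B) ≫ (ρ_ (Q.obj A)).hom) ⊗ₘ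
            ((Q.e A ▷ Q.obj B) ≫ (λ_ (Q.obj B)).hom)) := by
        rw [fact0, fact1]
    _ = (Q.Δ A ⊗ₘ Q.Δ B) ≫
          ((𝟙 (Q.obj A) ⊗ₘ Q.e A) ⊗ₘ (Q.e B ⊗ₘ 𝟙 (Q.obj B))) ≫
          tensorμ (Q.obj A) (𝟙_ C) (𝟙_ C) (Q.obj B) ≫
          ((ρ_ (Q.obj A)).hom ⊗ₘ (λ_ (Q.obj B)).hom) := by
        rw [tensorμ_natural_assoc (𝟙 (Q.obj A)) (Q.e A) (Q.e B) (𝟙 (Q.obj B))]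
        congr 2
        rw [tensorHom_comp_tensorHom]
        congr 1 <;> simp [MonoidalCategory.tensorHom_def]
    _ = ((ρ_ (Q.obj A)).inv ⊗ₘ (λ_ (Q.obj B)).inv) ≫
          tensorμ (Q.obj A) (𝟙_ C) (𝟙_ C) (Q.obj B) ≫
          ((ρ_ (Q.obj A)).hom ⊗ₘ (λ_ (Q.obj B)).hom) := by
        rw [tensorHom_comp_tensorHom_assoc, id_tensorHom, Q.counit_comul A,
          tensorHom_id, Q.comul_counit B]
    _ = 𝟙 (Q.obj A ⊗ Q.obj B) := aux_unit_coherence _ _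
end
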